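/- Let (λ_j)_{j∈J} be negative reals, (b_j) nonzero scalars with σ_c = lim 2ln|b_j|/λ_j finite, and t₁ > σ_c. Suppose (q_j)_{j∈J} in L²[0,t₁] is biorthogonal to the family (e^{λ_j t})_{j∈J}, and for every ε > 0 there is K_ε > 0 with ‖q_j‖ ≤ K_ε e^{−λ_j ε}. Then the family { (q_j(t₁ − t)/b_j)·e^{λ_j t₁} : j ∈ J } is a Bessel sequence in L²[0,t₁]: there is M > 0 with ‖Σ_{j∈F} β_j (q_j(t₁−·)/b_j) e^{λ_j t₁}‖² ≤ M² Σ_{j∈F} |β_j|² for all finite F and scalars β_j. -/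

import Mathlib

/-!
Biorthogonality forces the exponents apart: for `i ≠ j`, by Cauchy–Schwarz,
`1 = ∫ (e^{λ_j t} - e^{λ_i t}) q_j ≤ ‖e^{λ_j ·} - e^{λ_i ·}‖ ‖q_j‖
   ≤ |λ_i - λ_j| √(t₁³/3) K e^{-λ_j ε}`,
so `e^{ελ_j} ≤ A |λ_i - λ_j|` with `A = K √(t₁³/3)`. The intervals of radius `e^{ελ_j} / 2A`
around the `λ_j` are then disjoint, and their images under `x ↦ e^{εx}` are disjoint subintervals
of `(0, e^{ε/2A})` of length at least `ε e^{2ελ_j} / A`; hence `∑ e^{2ελ_j} < ∞`. Since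
`t₁ > σ_c`, the squared norms `e^{2λ_j t₁} ‖q_j‖² / b_j²` of the family are eventually at most
`K² e^{2ελ_j}`, so they are summable, and a family with square-summable norms is Bessel by the
triangle and Cauchy–Schwarz inequalities.
-/

open Real MeasureTheory Filter Set

section L2

variable {α : Type*} [MeasurableSpace α] {μ : Measure α}

lemma integral_mul_eq_inner_toLp {f g : α → ℝ} (hf : MemLp f 2 μ) (hg : MemLp g 2 μ) :
    ∫ x, f x * g x ∂μ = inner ℝ (hf.toLp f) (hg.toLp g) := by
  rw [L2.inner_def]
  refine integral_congr_ae ?_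
  filter_upwards [hf.coeFn_toLp, hg.coeFn_toLp] with x hfx hgx
  simp [hfx, hgx, mul_comm]

lemma sqrt_integral_sq_eq_norm_toLp {f : α → ℝ} (hf : MemLp f 2 μ) :
    √(∫ x, f x ^ 2 ∂μ) = ‖hf.toLp f‖ := by
  simp_rw [sq, integral_mul_eq_inner_toLp hf hf, real_inner_self_eq_norm_mul_norm]
  exact sqrt_mul_self (norm_nonneg _)

lemma integral_mul_le_sqrt_mul_sqrt {f g : α → ℝ} (hf : MemLp f 2 μ) (hg : MemLp g 2 μ) :
    ∫ x, f x * g x ∂μ ≤ √(∫ x, f x ^ 2 ∂μ) * √(∫ x, g x ^ 2 ∂μ) := by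
  rw [integral_mul_eq_inner_toLp hf hg, sqrt_integral_sq_eq_norm_toLp hf,
    sqrt_integral_sq_eq_norm_toLp hg]
  exact real_inner_le_norm _ _

lemma integral_sq_sum_le_sq_sum_sqrt {ι : Type*} (s : Finset ι) {f : ι → α → ℝ}
    (hf : ∀ i ∈ s, MemLp (f i) 2 μ) :
    ∫ x, (∑ i ∈ s, f i x) ^ 2 ∂μ ≤ (∑ i ∈ s, √(∫ x, f i x ^ 2 ∂μ)) ^ 2 := by
  have hint : ∀ i ∈ s, ∀ j ∈ s, Integrable (fun x => f i x * f j x) μ :=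
    fun i hi j hj => (hf i hi).integrable_mul (hf j hj)
  simp_rw [sq (∑ i ∈ s, _), Finset.sum_mul_sum]
  rw [integral_finsetSum _ fun i hi => integrable_finsetSum _ (hint i hi)]
  gcongr with i hi
  rw [integral_finsetSum _ (hint i hi)]
  gcongr with j hj
  exact integral_mul_le_sqrt_mul_sqrt (hf i hi) (hf j hj)

lemma integral_sq_sum_mul_le {ι : Type*} (s : Finset ι) {f : ι → α → ℝ}
    (hf : ∀ i ∈ s, MemLp (f i) 2 μ) (β : ι → ℝ) :
    ∫ x, (∑ i ∈ s, β i * f i x) ^ 2 ∂μ ≤ (∑ i ∈ s, β i ^ 2) * ∑ i ∈ s, ∫ x, f i x ^ 2 ∂μ := by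
  have hnorm : ∀ i, √(∫ x, (β i * f i x) ^ 2 ∂μ) = |β i| * √(∫ x, f i x ^ 2 ∂μ) := fun i => by
    simp_rw [mul_pow, integral_const_mul, sqrt_mul (sq_nonneg _), sqrt_sq_eq_abs]
  calc ∫ x, (∑ i ∈ s, β i * f i x) ^ 2 ∂μ
      ≤ (∑ i ∈ s, |β i| * √(∫ x, f i x ^ 2 ∂μ)) ^ 2 := by
        simpa only [hnorm] using
          integral_sq_sum_le_sq_sum_sqrt s fun i hi => (hf i hi).const_mul (β i)
    _ ≤ (∑ i ∈ s, |β i| ^ 2) * ∑ i ∈ s, √(∫ x, f i x ^ 2 ∂μ) ^ 2 :=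
        Finset.sum_mul_sq_le_sq_mul_sq _ _ _
    _ = (∑ i ∈ s, β i ^ 2) * ∑ i ∈ s, ∫ x, f i x ^ 2 ∂μ := by
        simp_rw [sq_abs, sq_sqrt (integral_nonneg fun x => sq_nonneg (f _ x))]

lemma exists_integral_sq_sum_mul_le_of_summable {ι : Type*} {f : ι → α → ℝ}
    (hf : ∀ i, MemLp (f i) 2 μ) (hsum : Summable fun i => ∫ x, f i x ^ 2 ∂μ) :
    ∃ M : ℝ, 0 < M ∧ ∀ (s : Finset ι) (β : ι → ℝ),
      ∫ x, (∑ i ∈ s, β i * f i x) ^ 2 ∂μ ≤ M ^ 2 * ∑ i ∈ s, β i ^ 2 := by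
  have hnonneg : ∀ i, 0 ≤ ∫ x, f i x ^ 2 ∂μ := fun i => integral_nonneg fun x => sq_nonneg _
  refine ⟨√((∑' i, ∫ x, f i x ^ 2 ∂μ) + 1), by positivity, fun s β => ?_⟩
  rw [sq_sqrt (by positivity), mul_comm]
  calc ∫ x, (∑ i ∈ s, β i * f i x) ^ 2 ∂μ
      ≤ (∑ i ∈ s, β i ^ 2) * ∑ i ∈ s, ∫ x, f i x ^ 2 ∂μ :=
        integral_sq_sum_mul_le s (fun i _ => hf i) β
    _ ≤ (∑ i ∈ s, β i ^ 2) * ((∑' i, ∫ x, f i x ^ 2 ∂μ) + 1) := by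
        gcongr
        linarith [hsum.sum_le_tsum s fun i _ => hnonneg i]

lemma one_le_sqrt_integral_sq_sub_mul_sqrt_integral_sq {e e' q : α → ℝ} (he : MemLp e 2 μ)
    (he' : MemLp e' 2 μ) (hq : MemLp q 2 μ)
    (h1 : ∫ x, e x * q x ∂μ = 1) (h0 : ∫ x, e' x * q x ∂μ = 0) :
    1 ≤ √(∫ x, (e x - e' x) ^ 2 ∂μ) * √(∫ x, q x ^ 2 ∂μ) :=
  calc (1 : ℝ) = ∫ x, (e x - e' x) * q x ∂μ := by
        simp_rw [sub_mul]
        rw [integral_sub (f := fun x => e x * q x) (g := fun x => e' x * q x)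
          (he.integrable_mul hq) (he'.integrable_mul hq), h1, h0, sub_zero]
    _ ≤ _ := integral_mul_le_sqrt_mul_sqrt (he.sub he') hq

end L2

lemma abs_exp_sub_exp_le_of_nonpos {x y : ℝ} (hx : x ≤ 0) (hy : y ≤ 0) :
    |exp x - exp y| ≤ |x - y| := by
  wlog hxy : x ≤ y generalizing x y
  · rw [abs_sub_comm, abs_sub_comm x]
    exact this hy hx (le_of_not_ge hxy)
  rw [abs_sub_comm, abs_of_nonneg (sub_nonneg.2 (exp_le_exp.2 hxy)),
    abs_of_nonpos (sub_nonpos.2 hxy)]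
  have hsplit : exp x = exp y * exp (x - y) := by rw [← exp_add, add_sub_cancel]
  nlinarith [add_one_le_exp (x - y), exp_le_one_iff.2 hy, exp_pos y]

lemma two_mul_mul_exp_le_exp_add_sub_exp_sub {y d : ℝ} (hd : 0 ≤ d) :
    2 * d * exp y ≤ exp (y + d) - exp (y - d) := by
  have h := self_le_sinh_iff.2 hd
  rw [sinh_eq] at h
  rw [exp_add, sub_eq_add_neg y, exp_add]
  nlinarith [exp_pos y]

lemma memLp_exp_mul_Icc {a T : ℝ} (ha : a ≤ 0) (p : ENNReal) :
    MemLp (fun x => exp (a * x)) p (volume.restrict (Icc 0 T)) :=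
  AntitoneOn.memLp_isCompact isCompact_Icc fun _ _ _ _ hxy =>
    exp_le_exp.2 (mul_le_mul_of_nonpos_left hxy ha)

lemma integral_sq_exp_mul_sub_exp_mul_le {a b T : ℝ} (ha : a ≤ 0) (hb : b ≤ 0) (hT : 0 ≤ T) :
    ∫ x in Icc 0 T, (exp (a * x) - exp (b * x)) ^ 2 ≤ (a - b) ^ 2 * (T ^ 3 / 3) := by
  calc ∫ x in Icc 0 T, (exp (a * x) - exp (b * x)) ^ 2
      ≤ ∫ x in Icc 0 T, (a - b) ^ 2 * x ^ 2 := by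
        refine setIntegral_mono_on (Continuous.integrableOn_Icc (by fun_prop))
          (Continuous.integrableOn_Icc (by fun_prop)) measurableSet_Icc fun x hx => ?_
        rw [← mul_pow, sq_le_sq, sub_mul]
        exact abs_exp_sub_exp_le_of_nonpos (mul_nonpos_of_nonpos_of_nonneg ha hx.1)
          (mul_nonpos_of_nonpos_of_nonneg hb hx.1)
    _ = (a - b) ^ 2 * (T ^ 3 / 3) := by
        rw [integral_Icc_eq_integral_Ioc, ← intervalIntegral.integral_of_le hT,
          intervalIntegral.integral_const_mul, integral_pow]
        ring

lemma one_le_abs_sub_mul_sqrt_integral_sq {a b T : ℝ} {q : ℝ → ℝ} (ha : a ≤ 0) (hb : b ≤ 0)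
    (hT : 0 ≤ T) (hq : MemLp q 2 (volume.restrict (Icc 0 T)))
    (h1 : ∫ x in Icc 0 T, exp (b * x) * q x = 1) (h0 : ∫ x in Icc 0 T, exp (a * x) * q x = 0) :
    1 ≤ |a - b| * √(T ^ 3 / 3) * √(∫ x in Icc 0 T, q x ^ 2) := by
  refine (one_le_sqrt_integral_sq_sub_mul_sqrt_integral_sq (memLp_exp_mul_Icc hb 2)
    (memLp_exp_mul_Icc ha 2) hq h1 h0).trans ?_
  gcongr
  calc √(∫ x in Icc 0 T, (exp (b * x) - exp (a * x)) ^ 2)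
      ≤ √((b - a) ^ 2 * (T ^ 3 / 3)) := sqrt_le_sqrt (integral_sq_exp_mul_sub_exp_mul_le hb ha hT)
    _ = |a - b| * √(T ^ 3 / 3) := by rw [sqrt_mul (sq_nonneg _), sqrt_sq_eq_abs, abs_sub_comm]

lemma exp_mul_le_mul_abs_sub_of_biorthogonal {a b T ε K : ℝ} {q : ℝ → ℝ} (ha : a ≤ 0)
    (hb : b ≤ 0) (hT : 0 ≤ T) (hq : MemLp q 2 (volume.restrict (Icc 0 T)))
    (h1 : ∫ x in Icc 0 T, exp (b * x) * q x = 1) (h0 : ∫ x in Icc 0 T, exp (a * x) * q x = 0)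
    (hK : √(∫ x in Icc 0 T, q x ^ 2) ≤ K * exp (-b * ε)) :
    exp (ε * b) ≤ K * √(T ^ 3 / 3) * |a - b| := by
  have h := (one_le_abs_sub_mul_sqrt_integral_sq ha hb hT hq h1 h0).trans
    (mul_le_mul_of_nonneg_left hK (by positivity))
  calc exp (ε * b) ≤ exp (ε * b) * (|a - b| * √(T ^ 3 / 3) * (K * exp (-b * ε))) :=
        le_mul_of_one_le_right (exp_pos _).le h
    _ = K * √(T ^ 3 / 3) * |a - b| := by
        rw [show -b * ε = -(ε * b) by ring, exp_neg]
        field_simp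

lemma sum_sub_le_of_pairwiseDisjoint_Ioo {ι : Type*} (s : Finset ι) {l u : ι → ℝ} {a c : ℝ}
    (hac : a ≤ c) (hlu : ∀ i ∈ s, l i ≤ u i) (hsub : ∀ i ∈ s, a ≤ l i ∧ u i ≤ c)
    (hdisj : (s : Set ι).PairwiseDisjoint fun i => Ioo (l i) (u i)) :
    ∑ i ∈ s, (u i - l i) ≤ c - a := by
  rw [← ENNReal.ofReal_le_ofReal_iff (sub_nonneg.2 hac),
    ENNReal.ofReal_sum_of_nonneg fun i hi => sub_nonneg.2 (hlu i hi)]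
  simp_rw [← Real.volume_Ioo]
  rw [← measure_biUnion_finset hdisj fun i _ => measurableSet_Ioo]
  exact measure_mono <| iUnion₂_subset fun i hi =>
    Ioo_subset_Ioo (hsub i hi).1 (hsub i hi).2

lemma add_le_sub_or_add_le_sub_of_add_le_abs_sub {x y r r' : ℝ} (h : r + r' ≤ |x - y|) :
    x + r ≤ y - r' ∨ y + r' ≤ x - r := by
  rcases le_total x y with hxy | hxy
  · rw [abs_of_nonpos (sub_nonpos.2 hxy)] at h
    exact Or.inl (by linarith)
  · rw [abs_of_nonneg (sub_nonneg.2 hxy)] at h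
    exact Or.inr (by linarith)

lemma pairwiseDisjoint_Ioo_of_add_le_abs_sub {ι : Type*} (s : Finset ι) {x r : ι → ℝ}
    (hsep : ∀ i ∈ s, ∀ j ∈ s, i ≠ j → r i + r j ≤ |x i - x j|) {f : ℝ → ℝ} (hf : Monotone f) :
    (s : Set ι).PairwiseDisjoint fun i => Ioo (f (x i - r i)) (f (x i + r i)) :=
  fun i hi j hj hij => by
    rw [Function.onFun, Ioo_disjoint_Ioo]
    rcases add_le_sub_or_add_le_sub_of_add_le_abs_sub (hsep i hi j hj hij) with h | h
    · exact (min_le_left _ _).trans <| (hf h).trans (le_max_right _ _)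
    · exact (min_le_right _ _).trans <| (hf h).trans (le_max_left _ _)

lemma sum_exp_le_of_separated {ι : Type*} (s : Finset ι) {lam : ι → ℝ} {ε A : ℝ}
    (hε : 0 < ε) (hA : 0 < A) (hlam : ∀ i ∈ s, lam i ≤ 0)
    (hsep : ∀ i ∈ s, ∀ j ∈ s, i ≠ j → exp (ε * lam j) ≤ A * |lam i - lam j|) :
    ∑ i ∈ s, exp (2 * ε * lam i) ≤ A * exp (ε / (2 * A)) / ε := by
  set r : ι → ℝ := fun i => exp (ε * lam i) / (2 * A)
  have hr : ∀ i, 0 ≤ r i := fun i => by positivity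
  have hmono : Monotone fun x => exp (ε * x) := fun _ _ h =>
    exp_le_exp.2 (mul_le_mul_of_nonneg_left h hε.le)
  have hradii : ∀ i ∈ s, ∀ j ∈ s, i ≠ j → r i + r j ≤ |lam i - lam j| := fun i hi j hj hij => by
    have hji := hsep j hj i hi hij.symm
    rw [abs_sub_comm] at hji
    rw [← add_div, div_le_iff₀ (by positivity)]
    linarith [hsep i hi j hj hij]
  have hdisj := pairwiseDisjoint_Ioo_of_add_le_abs_sub s hradii hmono
  have hbound : ∀ i ∈ s, lam i + r i ≤ 1 / (2 * A) := fun i hi => by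
    have : exp (ε * lam i) ≤ 1 :=
      exp_le_one_iff.2 (mul_nonpos_of_nonneg_of_nonpos hε.le (hlam i hi))
    have : r i ≤ 1 / (2 * A) := div_le_div_of_nonneg_right this (by positivity)
    linarith [hlam i hi]
  have htotal := sum_sub_le_of_pairwiseDisjoint_Ioo s (a := 0) (c := exp (ε / (2 * A)))
    (exp_pos _).le (fun i _ => hmono (by linarith [hr i]))
    (fun i hi => ⟨(exp_pos _).le, by simpa only [mul_one_div] using hmono (hbound i hi)⟩) hdisj
  have hlength : ∀ i,
      exp (2 * ε * lam i) ≤ A / ε * (exp (ε * (lam i + r i)) - exp (ε * (lam i - r i))) := fun i =>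
    calc exp (2 * ε * lam i) = A / ε * (2 * (ε * r i) * exp (ε * lam i)) := by
          simp only [r]
          rw [show 2 * ε * lam i = ε * lam i + ε * lam i by ring, exp_add]
          field_simp
      _ ≤ _ := by
          gcongr
          simpa only [mul_add, mul_sub] using
            two_mul_mul_exp_le_exp_add_sub_exp_sub (mul_nonneg hε.le (hr i))
  calc ∑ i ∈ s, exp (2 * ε * lam i)
      ≤ ∑ i ∈ s, A / ε * (exp (ε * (lam i + r i)) - exp (ε * (lam i - r i))) :=
        Finset.sum_le_sum fun i _ => hlength i
    _ ≤ A / ε * exp (ε / (2 * A)) := by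
        rw [← Finset.mul_sum]
        gcongr
        simpa using htotal
    _ = A * exp (ε / (2 * A)) / ε := by ring

lemma exp_mul_div_sq_le_exp {lam b s τ : ℝ} (hlam : lam < 0) (h : 2 * log |b| / lam < s) :
    exp ((s + τ) * lam) / b ^ 2 ≤ exp (τ * lam) := by
  rcases eq_or_ne b 0 with rfl | hb
  · simp [(exp_pos _).le]
  have hb2 : exp (s * lam) < b ^ 2 := by
    rw [← sq_abs, ← exp_log (abs_pos.2 hb), ← exp_nat_mul, exp_lt_exp]
    push_cast
    linarith [(div_lt_iff_of_neg hlam).1 h]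
  rw [div_le_iff₀ (by positivity), add_mul, exp_add, mul_comm (exp (s * lam))]
  exact mul_le_mul_of_nonneg_left hb2.le (exp_pos _).le

lemma integral_sq_div_mul_exp_le {α : Type*} [MeasurableSpace α] {μ : Measure α} {f : α → ℝ}
    {lam b t ε K : ℝ} (hlam : lam < 0) (hb : 2 * log |b| / lam < 2 * t - 4 * ε)
    (hf : √(∫ x, f x ^ 2 ∂μ) ≤ K * exp (-lam * ε)) :
    ∫ x, (f x / b * exp (lam * t)) ^ 2 ∂μ ≤ K ^ 2 * exp (2 * ε * lam) := by
  have hexp : exp (lam * t) ^ 2 * exp (-lam * ε) ^ 2 = exp ((2 * t - 4 * ε + 2 * ε) * lam) := by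
    rw [← mul_pow, ← exp_add, ← exp_nat_mul]
    ring_nf
  calc ∫ x, (f x / b * exp (lam * t)) ^ 2 ∂μ = exp (lam * t) ^ 2 / b ^ 2 * ∫ x, f x ^ 2 ∂μ := by
        rw [← integral_const_mul]
        congr 1 with x
        ring
    _ ≤ exp (lam * t) ^ 2 / b ^ 2 * (K * exp (-lam * ε)) ^ 2 := by
        gcongr
        exact (sqrt_le_iff.1 hf).2
    _ = K ^ 2 * (exp ((2 * t - 4 * ε + 2 * ε) * lam) / b ^ 2) := by
        rw [← hexp]
        ring
    _ ≤ K ^ 2 * exp (2 * ε * lam) := by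
        gcongr
        exact exp_mul_div_sq_le_exp hlam hb

theorem biorthogonal_family_is_bessel_general
    (lam : ℕ → ℝ) (hlam : ∀ j, lam j < 0)
    (b : ℕ → ℝ)
    (σc : ℝ)
    (hσc : Tendsto (fun j : ℕ => 2 * Real.log |b j| / lam j) atTop (nhds σc))
    (t₁ : ℝ) (ht₁pos : 0 < t₁) (ht₁ : σc < t₁)
    (q : ℕ → ℝ → ℝ)
    (hqL2 : ∀ j, MemLp (q j) 2 (volume.restrict (Set.Icc 0 t₁)))
    (hbiorth : ∀ i j : ℕ,
      (∫ t in (0:ℝ)..t₁, Real.exp (lam i * t) * q j t) = if i = j then 1 else 0)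
    (hest : ∀ ε : ℝ, 0 < ε → ∃ K : ℝ, 0 < K ∧ ∀ j : ℕ,
      (∫ t in (0:ℝ)..t₁, (q j t)^2) ^ (1/2 : ℝ) ≤ K * Real.exp (-(lam j) * ε)) :
    ∃ M : ℝ, 0 < M ∧ ∀ (F : Finset ℕ) (β : ℕ → ℝ),
      (∫ t in (0:ℝ)..t₁,
        (∑ j ∈ F, β j * (q j (t₁ - t) / b j) * Real.exp (lam j * t₁))^2)
      ≤ M^2 * ∑ j ∈ F, (β j)^2 := by
  have hIcc : ∀ f : ℝ → ℝ, ∫ t in (0:ℝ)..t₁, f t = ∫ t in Icc 0 t₁, f t := fun f => by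
    rw [intervalIntegral.integral_of_le ht₁pos.le, integral_Icc_eq_integral_Ioc]
  obtain ⟨ε, hε, hεσ⟩ : ∃ ε, 0 < ε ∧ σc < 2 * t₁ - 4 * ε :=
    ⟨(2 * t₁ - σc) / 8, by linarith, by linarith⟩
  obtain ⟨K, hK, hKq⟩ := hest ε hε
  simp only [hIcc, ← sqrt_eq_rpow] at hbiorth hKq
  have hexp_summable : Summable fun j => exp (2 * ε * lam j) :=
    summable_of_sum_le (fun j => (exp_pos _).le) fun s =>
      sum_exp_le_of_separated s hε (by positivity) (fun j _ => (hlam j).le) fun i _ j _ hij =>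
        exp_mul_le_mul_abs_sub_of_biorthogonal (hlam i).le (hlam j).le ht₁pos.le (hqL2 j)
          (by simpa using hbiorth j j) (by simpa [hij] using hbiorth i j) (hKq j)
  have hnorm_summable : Summable fun j => ∫ s in Icc 0 t₁, (q j s / b j * exp (lam j * t₁)) ^ 2 :=
    (hexp_summable.mul_left (K ^ 2)).of_norm_bounded_eventually_nat <| by
      filter_upwards [hσc.eventually_lt_const hεσ] with j hj
      rw [norm_of_nonneg (integral_nonneg fun s => sq_nonneg _)]
      exact integral_sq_div_mul_exp_le (hlam j) hj (hKq j)
  obtain ⟨M, hM, hbessel⟩ := exists_integral_sq_sum_mul_le_of_summable (fun j => by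
    simpa only [div_eq_mul_inv] using ((hqL2 j).mul_const (b j)⁻¹).mul_const (exp (lam j * t₁)))
    hnorm_summable
  refine ⟨M, hM, fun F β => ?_⟩
  have hflip := intervalIntegral.integral_comp_sub_left
    (fun s => (∑ j ∈ F, β j * (q j s / b j) * exp (lam j * t₁)) ^ 2) (a := 0) (b := t₁) t₁
  simp only [sub_zero, sub_self] at hflip
  rw [hflip, hIcc]
  simpa only [mul_assoc] using hbessel F β

/-- Key estimate of Theorem 2: if `(q_j)` is biorthogonal to `(e^{λ_j t})` on `[0,t₁]` and
`‖q_j‖ ≤ K_ε e^{−λ_j ε}` for every `ε > 0`, with `t₁` beyond the abscissa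
`σ_c = lim 2 ln|b_j|/λ_j`, then `{(q_j(t₁−t)/b_j) e^{λ_j t₁}}` is a Bessel sequence. -/
theorem biorthogonal_family_is_bessel
    (lam : ℕ → ℝ) (hlam : ∀ j, lam j < 0)
    (b : ℕ → ℝ) (hb : ∀ j, b j ≠ 0)
    (σc : ℝ)
    (hσc : Tendsto (fun j : ℕ => 2 * Real.log |b j| / lam j) atTop (nhds σc))
    (t₁ : ℝ) (ht₁pos : 0 < t₁) (ht₁ : σc < t₁)
    (q : ℕ → ℝ → ℝ)
    (hqL2 : ∀ j, MemLp (q j) 2 (volume.restrict (Set.Icc 0 t₁)))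
    (hbiorth : ∀ i j : ℕ,
      (∫ t in (0:ℝ)..t₁, Real.exp (lam i * t) * q j t) = if i = j then 1 else 0)
    (hest : ∀ ε : ℝ, 0 < ε → ∃ K : ℝ, 0 < K ∧ ∀ j : ℕ,
      (∫ t in (0:ℝ)..t₁, (q j t)^2) ^ (1/2 : ℝ) ≤ K * Real.exp (-(lam j) * ε)) :
    ∃ M : ℝ, 0 < M ∧ ∀ (F : Finset ℕ) (β : ℕ → ℝ),
      (∫ t in (0:ℝ)..t₁,
        (∑ j ∈ F, β j * (q j (t₁ - t) / b j) * Real.exp (lam j * t₁))^2)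
      ≤ M^2 * ∑ j ∈ F, (β j)^2 :=
  biorthogonal_family_is_bessel_general lam hlam b σc hσc t₁ ht₁pos ht₁ q hqL2 hbiorth hest
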